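/- arXiv:1506.08750 — 5 statements merged into one kernel-verified Lean document; each statement's English description precedes it below -/
import Mathlib

section
/- Every circular-arc graph is a B_3-EPG graph: if a finite simple graph G admits a circular-arc model, then G admits an EPG representation in which every path has at most 3 bends. -/
open SimpleGraph

/-- The circle, modeled as ℝ/ℤ. -/
abbrev ArcCircle : Type := AddCircle (1 : ℝ)

/-- A circular-arc model of a simple graph `G`: each vertex gets a nonempty open
arc (a proper, open, connected subset) of the circle, and distinct vertices are
adjacent iff their arcs intersect. -/
structure CAModel {V : Type*} (G : SimpleGraph V) where
  arc : V → Set ArcCircle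
  isOpen_arc : ∀ v, IsOpen (arc v)
  isConnected_arc : ∀ v, IsConnected (arc v)
  arc_ne_univ : ∀ v, arc v ≠ Set.univ
  adj_iff : ∀ u v, u ≠ v → (G.Adj u v ↔ (arc u ∩ arc v).Nonempty)

/-- A circular-arc model is normal if no two arcs together cover the circle. -/
def CAModel.Normal {V : Type*} {G : SimpleGraph V} (M : CAModel G) : Prop :=
  ∀ u v, M.arc u ∪ M.arc v ≠ Set.univ

/-- A circular-arc model is normal Helly if no set of at most three arcs covers
the whole circle. -/
def CAModel.NHCA {V : Type*} {G : SimpleGraph V} (M : CAModel G) : Prop :=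
  ∀ u v w, M.arc u ∪ M.arc v ∪ M.arc w ≠ Set.univ

/-- The grid graph on ℤ × ℤ: two points are adjacent iff they agree in one
coordinate and differ by exactly 1 in the other. -/
def gridGraph : SimpleGraph (ℤ × ℤ) where
  Adj p q := (p.1 = q.1 ∧ |p.2 - q.2| = 1) ∨ (p.2 = q.2 ∧ |p.1 - q.1| = 1)
  symm := by
    constructor
    rintro p q (⟨h1, h2⟩ | ⟨h1, h2⟩)
    · exact Or.inl ⟨h1.symm, by rwa [abs_sub_comm]⟩
    · exact Or.inr ⟨h1.symm, by rwa [abs_sub_comm]⟩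
  loopless := by constructor; rintro p (⟨_, h⟩ | ⟨_, h⟩) <;> simp at h

/-- A grid path: a simple path in the grid graph containing at least one edge. -/
structure GridPath where
  src : ℤ × ℤ
  dst : ℤ × ℤ
  walk : gridGraph.Walk src dst
  isPath : walk.IsPath
  pos_length : 1 ≤ walk.length

/-- The number of bends of a grid path: the number of internal vertices at which
one incident edge is horizontal and the other vertical, computed by comparing
the orientations of consecutive steps along the path. -/
def GridPath.bends (P : GridPath) : ℕ :=
  let verts := P.walk.support
  let steps := verts.zip verts.tail
  ((steps.zip steps.tail).filter
    (fun st => (st.1.1.1 == st.1.2.1) != (st.2.1.1 == st.2.2.1))).length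

/-- Two grid paths share an edge of the grid. -/
def GridPath.SharesEdge (P Q : GridPath) : Prop :=
  ∃ e, e ∈ P.walk.edges ∧ e ∈ Q.walk.edges

/-- An EPG representation of `G`: each vertex gets a grid path, and distinct
vertices are adjacent iff their paths share at least one grid edge. -/
structure EPGRep {V : Type*} (G : SimpleGraph V) where
  path : V → GridPath
  adj_iff : ∀ u v, u ≠ v → (G.Adj u v ↔ (path u).SharesEdge (path v))

/-- `G` is a `B_k`-EPG graph: it admits an EPG representation in which every
path has at most `k` bends. -/
def IsBkEPG {V : Type*} (G : SimpleGraph V) (k : ℕ) : Prop :=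
  ∃ rep : EPGRep G, ∀ v, (rep.path v).bends ≤ k

/-- The boundary of the axis-parallel rectangle of the grid determined by
columns `x1 < x2` and rows `y1 < y2`. -/
def rectBoundary (x1 x2 y1 y2 : ℤ) : Set (ℤ × ℤ) :=
  {p | ((p.1 = x1 ∨ p.1 = x2) ∧ y1 ≤ p.2 ∧ p.2 ≤ y2) ∨
       ((p.2 = y1 ∨ p.2 = y2) ∧ x1 ≤ p.1 ∧ p.1 ≤ x2)}

/-- An EPG representation is an EPR representation if the union of all the
paths is contained in the boundary of a single rectangle of the grid. -/
def EPGRep.InRectangle {V : Type*} {G : SimpleGraph V} (rep : EPGRep G) : Prop :=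
  ∃ x1 x2 y1 y2 : ℤ, x1 < x2 ∧ y1 < y2 ∧
    ∀ v, ∀ p ∈ (rep.path v).walk.support, p ∈ rectBoundary x1 x2 y1 y2

/-- `G` is a `B_k`-EPR graph: it admits an EPR representation in which every
path has at most `k` bends. -/
def IsBkEPR {V : Type*} (G : SimpleGraph V) (k : ℕ) : Prop :=
  ∃ rep : EPGRep G, rep.InRectangle ∧ ∀ v, (rep.path v).bends ≤ k

/-- Adjacency of the thick spider `S_n`: `inl` vertices form the clique,
`inr` vertices the stable set, and `c_i` is adjacent to `s_j` iff `i ≠ j`. -/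
def thickSpiderAdj (n : ℕ) : (Fin n ⊕ Fin n) → (Fin n ⊕ Fin n) → Prop
  | Sum.inl i, Sum.inl j => i ≠ j
  | Sum.inl i, Sum.inr j => i ≠ j
  | Sum.inr i, Sum.inl j => i ≠ j
  | Sum.inr _, Sum.inr _ => False

/-- The thick spider `S_n`. -/
def thickSpider (n : ℕ) : SimpleGraph (Fin n ⊕ Fin n) where
  Adj := thickSpiderAdj n
  symm := by
    constructor
    rintro (i | i) (j | j) h <;> simp only [thickSpiderAdj] at * <;> exact h.symm
  loopless := by constructor; rintro (i | i) h <;> simp [thickSpiderAdj] at h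

/-- Cyclic distance between `i` and `j` in `Fin n`: `min (|i-j|) (n - |i-j|)`. -/
def cycDist (n : ℕ) (i j : Fin n) : ℕ :=
  min ((i.val : ℤ) - (j.val : ℤ)).natAbs (n - ((i.val : ℤ) - (j.val : ℤ)).natAbs)

/-- The power of a cycle `C_n^k`: distinct vertices are adjacent iff their
cyclic distance is at most `k`. -/
def cyclePower (n k : ℕ) : SimpleGraph (Fin n) where
  Adj i j := i ≠ j ∧ cycDist n i j ≤ k
  symm := by
    constructor
    rintro i j ⟨h1, h2⟩
    refine ⟨h1.symm, ?_⟩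
    have : ((j.val : ℤ) - i.val).natAbs = ((i.val : ℤ) - j.val).natAbs := by
      rw [← Int.natAbs_neg, neg_sub]
    simpa [cycDist, this] using h2
  loopless := by constructor; rintro i ⟨h, _⟩; exact h rfl

/-- `H` is (isomorphic to) an induced subgraph of `G`. -/
def InducedSub {W V : Type*} (H : SimpleGraph W) (G : SimpleGraph V) : Prop :=
  Nonempty (H ↪g G)

/-- `G` is chordal: it contains no chordless cycle `C_m`, `m ≥ 4`, as an
induced subgraph. -/
def IsChordal {V : Type*} (G : SimpleGraph V) : Prop :=
  ∀ m : ℕ, 4 ≤ m → ¬ InducedSub (cyclePower m 1) G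

/-- `A` and `B` lie in different connected components of `G - X`. -/
def SeparatedIn {V : Type*} (G : SimpleGraph V) (X A B : Set V) : Prop :=
  ∀ (a b : V) (ha : a ∈ (Xᶜ : Set V)) (hb : b ∈ (Xᶜ : Set V)),
    a ∈ A → b ∈ B → ¬ (G.induce (Xᶜ : Set V)).Reachable ⟨a, ha⟩ ⟨b, hb⟩

/-- Four pairwise disjoint nonempty vertex sets `S 0, S 1, S 2, S 3` such that
`S 0` and `S 2` lie in different connected components of `G - (S 1 ∪ S 3)` and
`S 1` and `S 3` lie in different connected components of `G - (S 0 ∪ S 2)`. -/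
def FourSeparating {V : Type*} (G : SimpleGraph V) (S : Fin 4 → Set V) : Prop :=
  (∀ i j, i ≠ j → Disjoint (S i) (S j)) ∧
  (∀ i, (S i).Nonempty) ∧
  SeparatedIn G (S 1 ∪ S 3) (S 0) (S 2) ∧
  SeparatedIn G (S 0 ∪ S 2) (S 1) (S 3)

/-- A circular-arc model admits four points of the circle, each distinct from
every endpoint (frontier point) of every arc, such that no arc contains two of
these points. -/
def FourPointsProperty {V : Type*} {G : SimpleGraph V} (M : CAModel G) : Prop :=
  ∃ p : Fin 4 → ArcCircle, Function.Injective p ∧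
    (∀ i v, p i ∉ frontier (M.arc v)) ∧
    (∀ v i j, i ≠ j → ¬ (p i ∈ M.arc v ∧ p j ∈ M.arc v))

/-!
Cut the circle open at `0`. An arc becomes an interval from `x` to `h` of `[0, 1)`, read cyclically,
and whether two arcs meet depends only on the relative order of their endpoints (`ArcsMeet`), so the
endpoints may be replaced by their ranks in `1, …, N`. An arc `(L, R)` with `L < R` is drawn as the
grid path going along row `0` from column `L` to column `R`, down to row `-(L + 1)`, right to column
`N + 1` and one step up (3 bends); an arc with `R ≤ L` goes along row `0` from column `L` to column
`N + 1` and then down to row `-R` (1 bend). Two paths of the first kind share an edge iff their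
segments on row `0` overlap; paths of different kinds share an edge iff their segments on row `0`
overlap or the last step of the first lies on the vertical segment of the second; any two paths of
the second kind share the edge from `(N, 0)` to `(N + 1, 0)`.
-/

open Set

namespace ArcCircle

lemma coe_eq_coe_iff {s t : ℝ} : (s : ArcCircle) = t ↔ ∃ k : ℤ, s = t + k := by
  rw [QuotientAddGroup.eq, AddSubgroup.mem_zmultiples_iff]
  refine ⟨fun ⟨k, hk⟩ => ⟨-k, ?_⟩, fun ⟨k, hk⟩ => ⟨-k, ?_⟩⟩
  · rw [zsmul_eq_mul, mul_one] at hk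
    push_cast
    linarith
  · rw [hk, zsmul_eq_mul, mul_one]
    push_cast
    ring

lemma coe_add_intCast (t : ℝ) (k : ℤ) : ((t + k : ℝ) : ArcCircle) = t :=
  coe_eq_coe_iff.mpr ⟨k, rfl⟩

lemma image_Ioo_add_intCast (a b : ℝ) (k : ℤ) :
    ((↑) : ℝ → ArcCircle) '' Ioo (a + k) (b + k) = (↑) '' Ioo a b := by
  rw [← image_add_const_Ioo, image_image]
  simp only [coe_add_intCast]

lemma image_Ioo_inter_nonempty_iff {a b a' b' : ℝ} (h : a < b) (h' : a' < b') :
    (((↑) : ℝ → ArcCircle) '' Ioo a b ∩ (↑) '' Ioo a' b').Nonempty ↔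
      ∃ k : ℤ, a < b' + k ∧ a' + k < b := by
  constructor
  · rintro ⟨_, ⟨s, hs, rfl⟩, ⟨s', hs', hss'⟩⟩
    obtain ⟨k, rfl⟩ := coe_eq_coe_iff.mp hss'
    exact ⟨-k, by push_cast; linarith [hs.1, hs'.2], by push_cast; linarith [hs.2, hs'.1]⟩
  · rintro ⟨k, hk, hk'⟩
    rw [← image_Ioo_add_intCast a' b' k]
    refine (Nonempty.image _ ?_).mono (image_inter_subset _ _ _)
    rw [Ioo_inter_Ioo, nonempty_Ioo, max_lt_iff, lt_min_iff, lt_min_iff]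
    exact ⟨⟨h, hk⟩, hk', by linarith⟩

lemma exists_eq_image_Ioo {S : Set ArcCircle} (hO : IsOpen S) (hC : IsConnected S)
    (hS : S ≠ univ) :
    ∃ a b : ℝ, 0 ≤ a ∧ a < 1 ∧ a < b ∧ b ≤ a + 1 ∧ S = (↑) '' Ioo a b := by
  obtain ⟨z, hz⟩ := (ne_univ_iff_exists_notMem S).mp hS
  obtain ⟨c, rfl⟩ := QuotientAddGroup.mk_surjective z
  let e := AddCircle.openPartialHomeomorphCoe (1 : ℝ) c
  have hSe : S ⊆ e.target := fun w hw hwc => hz (hwc ▸ hw)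
  set T := e.symm '' S
  have hTc : T ⊆ Ioo c (c + 1) := by
    rintro _ ⟨w, hw, rfl⟩
    exact e.map_target (hSe hw)
  have hbdd : BddBelow T ∧ BddAbove T :=
    ⟨⟨c, fun t ht => (hTc ht).1.le⟩, ⟨c + 1, fun t ht => (hTc ht).2.le⟩⟩
  have hTconn : IsConnected T := hC.image _ (e.continuousOn_symm.mono hSe)
  have hTeq : T = Ioo (sInf T) (sSup T) := by
    refine subset_antisymm ?_ (hTconn.Ioo_csInf_csSup_subset hbdd.1 hbdd.2)
    have hTo : IsOpen T := e.isOpen_image_symm_of_subset_target hO hSe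
    calc T = interior T := hTo.interior_eq.symm
      _ ⊆ interior (Icc (sInf T) (sSup T)) := interior_mono (subset_Icc_csInf_csSup hbdd.1 hbdd.2)
      _ = Ioo (sInf T) (sSup T) := interior_Icc
  have hlt : sInf T < sSup T := nonempty_Ioo.mp (hTeq ▸ hTconn.nonempty)
  have hlo : c ≤ sInf T := le_csInf hTconn.nonempty fun t ht => (hTc ht).1.le
  have hhi : sSup T ≤ c + 1 := csSup_le hTconn.nonempty fun t ht => (hTc ht).2.le
  have hST : S = (↑) '' Ioo (sInf T) (sSup T) := by
    rw [← hTeq]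
    exact (e.image_symm_image_of_subset_target hSe).symm
  refine ⟨Int.fract (sInf T), sSup T - ⌊sInf T⌋, Int.fract_nonneg _, Int.fract_lt_one _,
    by rw [Int.fract]; linarith, by rw [Int.fract]; linarith, ?_⟩
  rw [hST, ← image_Ioo_add_intCast _ _ (-⌊sInf T⌋), Int.fract]
  push_cast
  ring_nf

end ArcCircle

/-- `(x, h)` stands for the open arc of the circle `[0, 1)` running from `x` to `h`; it passes
through the cut point `0` iff `h ≤ x`. -/
def ArcsMeet {α : Type*} [LinearOrder α] (x₁ h₁ x₂ h₂ : α) : Prop :=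
  if x₁ < h₁ then
    if x₂ < h₂ then x₁ < h₂ ∧ x₂ < h₁ else x₂ < h₁ ∨ x₁ < h₂
  else
    if x₂ < h₂ then x₁ < h₂ ∨ x₂ < h₁ else True

lemma StrictMonoOn.arcsMeet_iff {α β : Type*} [LinearOrder α] [LinearOrder β] {f : α → β}
    {s : Set α} (hf : StrictMonoOn f s) {x₁ h₁ x₂ h₂ : α} (hx₁ : x₁ ∈ s) (hh₁ : h₁ ∈ s)
    (hx₂ : x₂ ∈ s) (hh₂ : h₂ ∈ s) :
    ArcsMeet (f x₁) (f h₁) (f x₂) (f h₂) ↔ ArcsMeet x₁ h₁ x₂ h₂ := by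
  simp only [ArcsMeet, hf.lt_iff_lt hx₁ hh₁, hf.lt_iff_lt hx₂ hh₂, hf.lt_iff_lt hx₁ hh₂,
    hf.lt_iff_lt hx₂ hh₁]

lemma exists_int_iff_arcsMeet {x₁ y₁ x₂ y₂ : ℝ} (hx₁ : x₁ ∈ Ico 0 1) (hy₁ : y₁ ∈ Ioc x₁ (x₁ + 1))
    (hx₂ : x₂ ∈ Ico 0 1) (hy₂ : y₂ ∈ Ioc x₂ (x₂ + 1)) :
    (∃ k : ℤ, x₁ < y₂ + k ∧ x₂ + k < y₁) ↔
      ArcsMeet x₁ (if y₁ ≤ 1 then y₁ else y₁ - 1) x₂ (if y₂ ≤ 1 then y₂ else y₂ - 1) := by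
  obtain ⟨hx₁, hx₁'⟩ := hx₁
  obtain ⟨hx₂, hx₂'⟩ := hx₂
  obtain ⟨hy₁, hy₁'⟩ := hy₁
  obtain ⟨hy₂, hy₂'⟩ := hy₂
  have hk : (∃ k : ℤ, x₁ < y₂ + k ∧ x₂ + k < y₁) ↔
      (x₁ < y₂ - 1 ∧ x₂ - 1 < y₁) ∨ (x₁ < y₂ ∧ x₂ < y₁) ∨ (x₁ < y₂ + 1 ∧ x₂ + 1 < y₁) := by
    constructor
    · rintro ⟨k, hk₁, hk₂⟩
      have hk_lt : k < 2 := by exact_mod_cast (by linarith : (k : ℝ) < 2)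
      have hk_gt : -2 < k := by exact_mod_cast (by linarith : (-2 : ℝ) < k)
      obtain rfl | rfl | rfl : k = -1 ∨ k = 0 ∨ k = 1 := by omega
      all_goals push_cast at hk₁ hk₂
      · exact Or.inl ⟨by linarith, by linarith⟩
      · exact Or.inr (Or.inl ⟨by linarith, by linarith⟩)
      · exact Or.inr (Or.inr ⟨hk₁, hk₂⟩)
    · rintro (h | h | h)
      · exact ⟨-1, by push_cast; linarith [h.1], by push_cast; linarith [h.2]⟩
      · exact ⟨0, by push_cast; linarith [h.1], by push_cast; linarith [h.2]⟩
      · exact ⟨1, by push_cast; linarith [h.1], by push_cast; linarith [h.2]⟩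
  rw [hk, ArcsMeet]
  split_ifs <;> grind

lemma Finset.exists_strictMonoOn_mem_Icc {α : Type*} [LinearOrder α] (D : Finset α) :
    ∃ f : α → ℕ, StrictMonoOn f ↑D ∧ ∀ d ∈ D, f d ∈ Set.Icc 1 D.card := by
  refine ⟨fun r => (D.filter (· ≤ r)).card, fun a _ b hb hab => ?_, fun d hd => ⟨?_, ?_⟩⟩
  · refine Finset.card_lt_card ((Finset.ssubset_iff_of_subset ?_).mpr ⟨b, ?_, ?_⟩)
    · exact fun c hc => Finset.mem_filter.mpr
        ⟨(Finset.mem_filter.mp hc).1, (Finset.mem_filter.mp hc).2.trans hab.le⟩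
    · exact Finset.mem_filter.mpr ⟨hb, le_rfl⟩
    · simpa using fun _ => hab
  · exact Finset.card_pos.mpr ⟨d, Finset.mem_filter.mpr ⟨hd, le_rfl⟩⟩
  · exact Finset.card_filter_le _ _

namespace CAModel

variable {V : Type*} {G : SimpleGraph V}

lemma exists_arcsMeet_iff (M : CAModel G) : ∃ x h : V → ℝ,
    ∀ u v, (M.arc u ∩ M.arc v).Nonempty ↔ ArcsMeet (x u) (h u) (x v) (h v) := by
  choose a b ha ha' hab hba hM using fun v =>
    ArcCircle.exists_eq_image_Ioo (M.isOpen_arc v) (M.isConnected_arc v) (M.arc_ne_univ v)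
  refine ⟨a, fun v => if b v ≤ 1 then b v else b v - 1, fun u v => ?_⟩
  rw [hM u, hM v, ArcCircle.image_Ioo_inter_nonempty_iff (hab u) (hab v)]
  exact exists_int_iff_arcsMeet ⟨ha u, ha' u⟩ ⟨hab u, hba u⟩ ⟨ha v, ha' v⟩ ⟨hab v, hba v⟩

lemma exists_nat_arcsMeet_iff [Fintype V] (M : CAModel G) :
    ∃ (N : ℕ) (L R : V → ℕ), (∀ v, L v ∈ Icc 1 N ∧ R v ∈ Icc 1 N) ∧
      ∀ u v, (M.arc u ∩ M.arc v).Nonempty ↔ ArcsMeet (L u) (R u) (L v) (R v) := by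
  classical
  obtain ⟨x, h, hxh⟩ := M.exists_arcsMeet_iff
  let D := Finset.univ.image x ∪ Finset.univ.image h
  have hx v : x v ∈ D := Finset.mem_union_left _ (Finset.mem_image_of_mem _ (Finset.mem_univ v))
  have hh v : h v ∈ D := Finset.mem_union_right _ (Finset.mem_image_of_mem _ (Finset.mem_univ v))
  obtain ⟨f, hf, hfD⟩ := D.exists_strictMonoOn_mem_Icc
  refine ⟨D.card, fun v => f (x v), fun v => f (h v), fun v => ⟨hfD _ (hx v), hfD _ (hh v)⟩,
    fun u v => ?_⟩
  rw [hxh, hf.arcsMeet_iff (hx u) (hh u) (hx v) (hh v)]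

end CAModel

lemma gridGraph_adj_iff {p q : ℤ × ℤ} : gridGraph.Adj p q ↔
    (p.1 = q.1 ∧ (p.2 = q.2 + 1 ∨ q.2 = p.2 + 1)) ∨
      (p.2 = q.2 ∧ (p.1 = q.1 + 1 ∨ q.1 = p.1 + 1)) := by
  change (p.1 = q.1 ∧ |p.2 - q.2| = 1) ∨ (p.2 = q.2 ∧ |p.1 - q.1| = 1) ↔ _
  simp only [abs_eq (zero_le_one' ℤ)]
  omega

lemma List.zip_tail_map_range {α : Type*} (f : ℕ → α) (n : ℕ) :
    ((List.range (n + 1)).map f).zip ((List.range (n + 1)).map f).tail =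
      (List.range n).map fun i => (f i, f (i + 1)) := by
  induction n generalizing f with
  | zero => simp
  | succ n ih =>
    rw [List.range_succ_eq_map, List.range_succ_eq_map]
    simpa [Function.comp_def, List.range_succ_eq_map] using ih (fun i => f (i + 1))

namespace GridPath

def walkOfFun (f : ℕ → ℤ × ℤ) :
    (n : ℕ) → (∀ i < n, gridGraph.Adj (f i) (f (i + 1))) → gridGraph.Walk (f 0) (f n)
  | 0, _ => .nil
  | n + 1, h => (walkOfFun f n fun i hi => h i (by omega)).concat (h n n.lt_succ_self)

variable {f : ℕ → ℤ × ℤ} {n : ℕ} {hf : ∀ i < n, gridGraph.Adj (f i) (f (i + 1))}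

lemma support_walkOfFun : (walkOfFun f n hf).support = (List.range (n + 1)).map f := by
  induction n with
  | zero => rfl
  | succ n ih => simp [walkOfFun, ih, List.range_succ]

lemma edges_walkOfFun :
    (walkOfFun f n hf).edges = (List.range n).map fun i => s(f i, f (i + 1)) := by
  induction n with
  | zero => rfl
  | succ n ih => simp [walkOfFun, ih, List.range_succ]

lemma length_walkOfFun : (walkOfFun f n hf).length = n := by
  induction n with
  | zero => rfl
  | succ n ih => simp [walkOfFun, ih]

def ofFun (f : ℕ → ℤ × ℤ) (n : ℕ) (hn : 1 ≤ n) (hf : ∀ i < n, gridGraph.Adj (f i) (f (i + 1)))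
    (hinj : InjOn f (Iic n)) : GridPath where
  src := f 0
  dst := f n
  walk := walkOfFun f n hf
  isPath := by
    refine Walk.IsPath.mk' ?_
    rw [support_walkOfFun]
    exact List.nodup_range.map_on fun i hi j hj => hinj (by simpa [Nat.lt_succ_iff] using hi)
      (by simpa [Nat.lt_succ_iff] using hj)
  pos_length := length_walkOfFun.symm ▸ hn

lemma sharesEdge_ofFun_iff {g : ℕ → ℤ × ℤ} {m : ℕ} (hn : 1 ≤ n) (hm : 1 ≤ m)
    (hg : ∀ i < m, gridGraph.Adj (g i) (g (i + 1))) (hfi : InjOn f (Iic n))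
    (hgi : InjOn g (Iic m)) :
    (ofFun f n hn hf hfi).SharesEdge (ofFun g m hm hg hgi) ↔
      ∃ i < n, ∃ j < m, s(f i, f (i + 1)) = s(g j, g (j + 1)) := by
  simp only [SharesEdge, ofFun, edges_walkOfFun, List.mem_map, List.mem_range]
  constructor
  · rintro ⟨_, ⟨i, hi, rfl⟩, j, hj, hij⟩
    exact ⟨i, hi, j, hj, hij.symm⟩
  · rintro ⟨i, hi, j, hj, hij⟩
    exact ⟨_, ⟨i, hi, rfl⟩, j, hj, hij.symm⟩

lemma bends_ofFun_le (hn : 1 ≤ n) (hinj : InjOn f (Iic n)) (S : Finset ℕ)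
    (hS : ∀ i, i + 1 < n → ¬((f i).1 = (f (i + 1)).1 ↔ (f (i + 1)).1 = (f (i + 2)).1) → i ∈ S) :
    (ofFun f n hn hf hinj).bends ≤ S.card := by
  obtain ⟨n, rfl⟩ : ∃ m, n = m + 1 := ⟨n - 1, by omega⟩
  simp only [bends, ofFun, support_walkOfFun, List.zip_tail_map_range, List.filter_map,
    List.length_map]
  rw [← List.toFinset_card_of_nodup (List.nodup_range.filter _)]
  refine Finset.card_le_card fun i hi => hS i ?_ ?_ <;>
    simp_all [List.mem_range]

lemma sharesEdge_comm {P Q : GridPath} : P.SharesEdge Q ↔ Q.SharesEdge P :=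
  ⟨fun ⟨e, hP, hQ⟩ => ⟨e, hQ, hP⟩, fun ⟨e, hQ, hP⟩ => ⟨e, hP, hQ⟩⟩

end GridPath

def nonwrapVertex (N L R : ℕ) (i : ℕ) : ℤ × ℤ :=
  if i ≤ R - L then ((L : ℤ) + i, 0)
  else if i ≤ R + 1 then ((R : ℤ), (R : ℤ) - L - i)
  else if i ≤ N + 2 then ((i : ℤ) - 1, -((L : ℤ) + 1))
  else ((N : ℤ) + 1, -(L : ℤ))

def wrapVertex (N L : ℕ) (i : ℕ) : ℤ × ℤ :=
  if i ≤ N + 1 - L then ((L : ℤ) + i, 0)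
  else ((N : ℤ) + 1, ((N : ℤ) + 1 - L) - i)

section nonwrap

variable {N L R : ℕ}

lemma nonwrapVertex_step (hLR : L < R) (hR : R ≤ N) {i : ℕ} (hi : i < N + 3) :
    (i < R - L ∧ nonwrapVertex N L R i = ((L : ℤ) + i, 0) ∧
      nonwrapVertex N L R (i + 1) = ((L : ℤ) + i + 1, 0)) ∨
    (R - L ≤ i ∧ i < R + 1 ∧ nonwrapVertex N L R i = ((R : ℤ), (R : ℤ) - L - i) ∧
      nonwrapVertex N L R (i + 1) = ((R : ℤ), (R : ℤ) - L - i - 1)) ∨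
    (R + 1 ≤ i ∧ i < N + 2 ∧ nonwrapVertex N L R i = ((i : ℤ) - 1, -((L : ℤ) + 1)) ∧
      nonwrapVertex N L R (i + 1) = ((i : ℤ), -((L : ℤ) + 1))) ∨
    (i = N + 2 ∧ nonwrapVertex N L R i = ((N : ℤ) + 1, -((L : ℤ) + 1)) ∧
      nonwrapVertex N L R (i + 1) = ((N : ℤ) + 1, -(L : ℤ))) := by
  unfold nonwrapVertex
  split_ifs <;> simp only [Prod.mk.injEq, and_true, true_and] <;> omega

lemma nonwrapVertex_adj (hLR : L < R) (hR : R ≤ N) :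
    ∀ i < N + 3, gridGraph.Adj (nonwrapVertex N L R i) (nonwrapVertex N L R (i + 1)) := by
  intro i hi
  rcases nonwrapVertex_step hLR hR hi with ⟨-, e, e'⟩ | ⟨-, -, e, e'⟩ | ⟨-, -, e, e'⟩ | ⟨-, e, e'⟩ <;>
    rw [gridGraph_adj_iff, e, e'] <;> omega

lemma nonwrapVertex_injOn (hR : R ≤ N) :
    InjOn (nonwrapVertex N L R) (Iic (N + 3)) := by
  intro i hi j hj hij
  simp only [mem_Iic] at hi hj
  unfold nonwrapVertex at hij
  split_ifs at hij <;> simp only [Prod.mk.injEq, and_true, true_and] at hij <;> omega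

def nonwrapPath (N L R : ℕ) (hLR : L < R) (hR : R ≤ N) : GridPath :=
  .ofFun (nonwrapVertex N L R) (N + 3) (by omega) (nonwrapVertex_adj hLR hR)
    (nonwrapVertex_injOn hR)

lemma nonwrapPath_bends (hLR : L < R) (hR : R ≤ N) :
    (nonwrapPath N L R hLR hR).bends ≤ 3 := by
  refine (GridPath.bends_ofFun_le _ _ {R - L - 1, R, N + 1} fun i hi hturn => ?_).trans
    Finset.card_le_three
  simp only [Finset.mem_insert, Finset.mem_singleton]
  rcases nonwrapVertex_step hLR hR (i := i) (by omega) with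
    ⟨_, e₁, e₂⟩ | ⟨_, _, e₁, e₂⟩ | ⟨_, _, e₁, e₂⟩ | ⟨_, e₁, e₂⟩ <;>
  rcases nonwrapVertex_step hLR hR (i := i + 1) (by omega) with
    ⟨_, _, e₃⟩ | ⟨_, _, _, e₃⟩ | ⟨_, _, _, e₃⟩ | ⟨_, _, e₃⟩ <;>
  rw [e₁, e₂, e₃] at hturn <;> dsimp only at hturn <;> omega

end nonwrap

section wrap

variable {N L R : ℕ}

lemma wrapVertex_step (hLN : L ≤ N) {i : ℕ} :
    (i < N + 1 - L ∧ wrapVertex N L i = ((L : ℤ) + i, 0) ∧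
      wrapVertex N L (i + 1) = ((L : ℤ) + i + 1, 0)) ∨
    (N + 1 - L ≤ i ∧ wrapVertex N L i = ((N : ℤ) + 1, ((N : ℤ) + 1 - L) - i) ∧
      wrapVertex N L (i + 1) = ((N : ℤ) + 1, ((N : ℤ) + 1 - L) - i - 1)) := by
  unfold wrapVertex
  split_ifs <;> simp only [Prod.mk.injEq, and_true, true_and] <;> omega

lemma wrapVertex_adj (hLN : L ≤ N) (i : ℕ) :
    gridGraph.Adj (wrapVertex N L i) (wrapVertex N L (i + 1)) := by
  rcases wrapVertex_step hLN (i := i) with ⟨_, e, e'⟩ | ⟨_, e, e'⟩ <;>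
    rw [gridGraph_adj_iff, e, e'] <;> omega

lemma wrapVertex_injective : Function.Injective (wrapVertex N L) := by
  intro i j hij
  unfold wrapVertex at hij
  split_ifs at hij <;> simp only [Prod.mk.injEq, and_true, true_and] at hij <;> omega

def wrapPath (N L R : ℕ) (hLN : L ≤ N) (hR : 1 ≤ R) : GridPath :=
  .ofFun (wrapVertex N L) (N + 1 - L + R) (by omega) (fun i _ => wrapVertex_adj hLN i)
    wrapVertex_injective.injOn

lemma wrapPath_bends (hLN : L ≤ N) (hR : 1 ≤ R) : (wrapPath N L R hLN hR).bends ≤ 1 := by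
  refine (GridPath.bends_ofFun_le _ _ {N - L} fun i hi hturn => ?_).trans
    (Finset.card_singleton _).le
  rw [Finset.mem_singleton]
  rcases wrapVertex_step hLN (i := i) with ⟨_, e₁, e₂⟩ | ⟨_, e₁, e₂⟩ <;>
  rcases wrapVertex_step hLN (i := i + 1) with ⟨_, _, e₃⟩ | ⟨_, _, e₃⟩ <;>
  rw [e₁, e₂, e₃] at hturn <;> dsimp only at hturn <;> omega

end wrap

section sharing

variable {N L₁ R₁ L₂ R₂ : ℕ}

lemma nonwrapPath_sharesEdge_nonwrapPath_iff (hLR₁ : L₁ < R₁) (hR₁ : R₁ ≤ N)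
    (hLR₂ : L₂ < R₂) (hR₂ : R₂ ≤ N) :
    (nonwrapPath N L₁ R₁ hLR₁ hR₁).SharesEdge (nonwrapPath N L₂ R₂ hLR₂ hR₂) ↔
      L₁ < R₂ ∧ L₂ < R₁ := by
  rw [nonwrapPath, nonwrapPath, GridPath.sharesEdge_ofFun_iff]
  constructor
  · rintro ⟨i, hi, j, hj, he⟩
    rcases nonwrapVertex_step hLR₁ hR₁ hi with
      ⟨_, e₁, e₂⟩ | ⟨_, _, e₁, e₂⟩ | ⟨_, _, e₁, e₂⟩ | ⟨_, e₁, e₂⟩ <;>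
    rcases nonwrapVertex_step hLR₂ hR₂ hj with
      ⟨_, e₃, e₄⟩ | ⟨_, _, e₃, e₄⟩ | ⟨_, _, e₃, e₄⟩ | ⟨_, e₃, e₄⟩ <;>
    rw [e₁, e₂, e₃, e₄, Sym2.eq_iff] at he <;>
    simp only [Prod.mk.injEq, and_true, true_and] at he <;> omega
  · rintro ⟨h₁, h₂⟩
    obtain ⟨t, ht₁, ht₂, ht₁', ht₂'⟩ : ∃ t, L₁ ≤ t ∧ L₂ ≤ t ∧ t < R₁ ∧ t < R₂ :=
      ⟨max L₁ L₂, by omega, by omega, by omega, by omega⟩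
    refine ⟨t - L₁, by omega, t - L₂, by omega, ?_⟩
    unfold nonwrapVertex
    rw [if_pos (by omega), if_pos (by omega), if_pos (by omega), if_pos (by omega), Sym2.eq_iff]
    simp only [Prod.mk.injEq, and_true]
    omega

lemma nonwrapPath_sharesEdge_wrapPath_iff (hLR₁ : L₁ < R₁) (hR₁ : R₁ ≤ N)
    (hL₂ : L₂ ≤ N) (hR₂ : 1 ≤ R₂) :
    (nonwrapPath N L₁ R₁ hLR₁ hR₁).SharesEdge (wrapPath N L₂ R₂ hL₂ hR₂) ↔
      L₂ < R₁ ∨ L₁ < R₂ := by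
  rw [nonwrapPath, wrapPath, GridPath.sharesEdge_ofFun_iff]
  constructor
  · rintro ⟨i, hi, j, hj, he⟩
    rcases nonwrapVertex_step hLR₁ hR₁ hi with
      ⟨_, e₁, e₂⟩ | ⟨_, _, e₁, e₂⟩ | ⟨_, _, e₁, e₂⟩ | ⟨_, e₁, e₂⟩ <;>
    rcases wrapVertex_step hL₂ (i := j) with ⟨_, e₃, e₄⟩ | ⟨_, e₃, e₄⟩ <;>
    rw [e₁, e₂, e₃, e₄, Sym2.eq_iff] at he <;>
    simp only [Prod.mk.injEq, and_true, true_and] at he <;> omega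
  · rintro (h | h)
    · obtain ⟨t, ht₁, ht₂, ht₁', ht₂'⟩ : ∃ t, L₁ ≤ t ∧ L₂ ≤ t ∧ t < R₁ ∧ t < N + 1 :=
        ⟨max L₁ L₂, by omega, by omega, by omega, by omega⟩
      refine ⟨t - L₁, by omega, t - L₂, by omega, ?_⟩
      unfold nonwrapVertex wrapVertex
      split_ifs <;> simp only [Sym2.eq_iff, Prod.mk.injEq, and_true, true_and] <;> omega
    · -- the last, vertical, edge of the first path lies on the column `N + 1` of the second
      refine ⟨N + 2, by omega, N + 1 - L₂ + L₁, by omega, ?_⟩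
      unfold nonwrapVertex wrapVertex
      split_ifs <;> simp only [Sym2.eq_iff, Prod.mk.injEq, and_true, true_and] <;> omega

lemma wrapPath_sharesEdge_wrapPath (hL₁ : L₁ ≤ N) (hR₁ : 1 ≤ R₁) (hL₂ : L₂ ≤ N) (hR₂ : 1 ≤ R₂) :
    (wrapPath N L₁ R₁ hL₁ hR₁).SharesEdge (wrapPath N L₂ R₂ hL₂ hR₂) := by
  rw [wrapPath, wrapPath, GridPath.sharesEdge_ofFun_iff]
  refine ⟨N - L₁, by omega, N - L₂, by omega, ?_⟩
  unfold wrapVertex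
  rw [if_pos (by omega), if_pos (by omega), if_pos (by omega), if_pos (by omega), Sym2.eq_iff]
  simp only [Prod.mk.injEq, and_true]
  omega

end sharing

section arcPath

variable {N L₁ R₁ L₂ R₂ : ℕ}

def arcPath (N L R : ℕ) (hL : L ≤ N) (hR : R ∈ Icc 1 N) : GridPath :=
  if h : L < R then nonwrapPath N L R h hR.2 else wrapPath N L R hL hR.1

lemma arcPath_bends_le {N L R : ℕ} (hL : L ≤ N) (hR : R ∈ Icc 1 N) :
    (arcPath N L R hL hR).bends ≤ 3 := by
  unfold arcPath
  split_ifs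
  · exact nonwrapPath_bends _ _
  · exact (wrapPath_bends _ _).trans (by norm_num)

lemma arcPath_sharesEdge_iff (hL₁ : L₁ ≤ N) (hR₁ : R₁ ∈ Icc 1 N) (hL₂ : L₂ ≤ N)
    (hR₂ : R₂ ∈ Icc 1 N) :
    (arcPath N L₁ R₁ hL₁ hR₁).SharesEdge (arcPath N L₂ R₂ hL₂ hR₂) ↔ ArcsMeet L₁ R₁ L₂ R₂ := by
  unfold arcPath ArcsMeet
  split_ifs
  · exact nonwrapPath_sharesEdge_nonwrapPath_iff _ _ _ _
  · exact nonwrapPath_sharesEdge_wrapPath_iff _ _ _ _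
  · rw [GridPath.sharesEdge_comm, nonwrapPath_sharesEdge_wrapPath_iff]
  · exact iff_of_true (wrapPath_sharesEdge_wrapPath _ _ _ _) trivial

end arcPath

theorem CA_is_B3_EPG {V : Type*} [Fintype V] (G : SimpleGraph V)
    (h : Nonempty (CAModel G)) : IsBkEPG G 3 := by
  obtain ⟨M⟩ := h
  obtain ⟨N, L, R, hLR, hmeet⟩ := M.exists_nat_arcsMeet_iff
  refine ⟨⟨fun v => arcPath N (L v) (R v) (hLR v).1.2 (hLR v).2, fun u v huv => ?_⟩,
    fun v => arcPath_bends_le (hLR v).1.2 (hLR v).2⟩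
  rw [M.adj_iff u v huv, hmeet, arcPath_sharesEdge_iff]
end

section
/- For every integer n ≥ 2, the thick spider S_n is a circular-arc graph. -/
open SimpleGraph

/-!
Cut the circle `ℝ/ℤ` into `4n` equal ticks. The stable vertex `s_j` gets the short arc of radius one tick
around tick `4j`, and the clique vertex `c_i` the complement of the closure of that arc around
`4i`. Short arcs around distinct multiples of `4` are disjoint, each long arc `c_i` contains every
short arc `s_j` with `j ≠ i`, and all long arcs contain tick `4n - 2`.
-/

open Set

noncomputable def arcOf (a b : ℝ) : Set ArcCircle := ((↑) : ℝ → ArcCircle) '' Ioo a b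

section Arc

variable {a b c d : ℝ}

theorem isOpen_arcOf (a b : ℝ) : IsOpen (arcOf a b) :=
  QuotientAddGroup.isOpenMap_coe _ isOpen_Ioo

theorem isConnected_arcOf (h : a < b) : IsConnected (arcOf a b) :=
  (isConnected_Ioo h).image _ (AddCircle.continuous_mk' 1).continuousOn

theorem coe_mem_arcOf {x : ℝ} (k : ℤ) (h : x + k ∈ Ioo a b) : (x : ArcCircle) ∈ arcOf a b :=
  ⟨x + k, h, by simp⟩

theorem disjoint_arcOf (hbc : b ≤ c) (hda : d ≤ a + 1) : Disjoint (arcOf a b) (arcOf c d) := by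
  rw [Set.disjoint_left]
  rintro _ ⟨x, hx, rfl⟩ ⟨y, hy, hyx⟩
  have hxy : y = x := (AddCircle.coe_eq_coe_iff_of_mem_Ico (a := a)
    ⟨by linarith [hx.1, hx.2, hy.1], by linarith [hy.2]⟩
    ⟨hx.1.le, by linarith [hx.2, hy.1, hy.2]⟩).1 hyx
  linarith [hx.2, hy.1]

theorem arcOf_ne_univ (h : b ≤ a + 1) : arcOf a b ≠ univ := by
  intro huniv
  obtain ⟨x, hx, hxa⟩ : (a : ArcCircle) ∈ arcOf a b := huniv ▸ mem_univ _
  have : x = a := (AddCircle.coe_eq_coe_iff_of_mem_Ico (a := a)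
    ⟨hx.1.le, by linarith [hx.2]⟩ ⟨le_rfl, by linarith⟩).1 hxa
  exact hx.1.ne' this

end Arc

noncomputable def tickArc (N : ℕ) (a b : ℤ) : Set ArcCircle := arcOf (a / N) (b / N)

section Tick

variable {N : ℕ} {a b c d : ℤ}

theorem intCast_div_lt_intCast_div_iff (hN : 0 < N) : (a : ℝ) / N < b / N ↔ a < b := by
  rw [div_lt_div_iff_of_pos_right (by exact_mod_cast hN), Int.cast_lt]

theorem intCast_div_le_intCast_div_iff (hN : 0 < N) : (a : ℝ) / N ≤ b / N ↔ a ≤ b := by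
  rw [div_le_div_iff_of_pos_right (by exact_mod_cast hN), Int.cast_le]

theorem intCast_div_add_intCast (hN : 0 < N) (m k : ℤ) :
    (m : ℝ) / N + k = ((m + N * k : ℤ) : ℝ) / N := by
  field_simp
  push_cast
  ring

theorem isConnected_tickArc (hN : 0 < N) (h : a < b) : IsConnected (tickArc N a b) :=
  isConnected_arcOf ((intCast_div_lt_intCast_div_iff hN).2 h)

theorem tickArc_ne_univ (hN : 0 < N) (h : b ≤ a + N) : tickArc N a b ≠ univ :=
  arcOf_ne_univ <| by
    rw [← Int.cast_one, intCast_div_add_intCast hN, intCast_div_le_intCast_div_iff hN]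
    omega

theorem disjoint_tickArc (hN : 0 < N) (hbc : b ≤ c) (hda : d ≤ a + N) :
    Disjoint (tickArc N a b) (tickArc N c d) :=
  disjoint_arcOf ((intCast_div_le_intCast_div_iff hN).2 hbc) <| by
    rw [← Int.cast_one, intCast_div_add_intCast hN, intCast_div_le_intCast_div_iff hN]
    omega

theorem tick_mem_tickArc (hN : 0 < N) {m : ℤ} (k : ℤ) (hlo : a < m + N * k)
    (hhi : m + N * k < b) : ((m / N : ℝ) : ArcCircle) ∈ tickArc N a b :=
  coe_mem_arcOf k <| by
    rw [intCast_div_add_intCast hN, mem_Ioo, intCast_div_lt_intCast_div_iff hN,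
      intCast_div_lt_intCast_div_iff hN]
    exact ⟨hlo, hhi⟩

end Tick

noncomputable def thickSpiderArc (n : ℕ) : Fin n ⊕ Fin n → Set ArcCircle
  | .inl i => tickArc (4 * n) (4 * i + 1) (4 * i + 4 * n - 1)
  | .inr j => tickArc (4 * n) (4 * j - 1) (4 * j + 1)

section ThickSpider

variable {n : ℕ}

theorem thickSpiderArc_inl_inter_inl_nonempty (i j : Fin n) :
    (thickSpiderArc n (.inl i) ∩ thickSpiderArc n (.inl j)).Nonempty := by
  have hi := i.isLt
  have hj := j.isLt
  have hn : 0 < 4 * n := by omega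
  exact ⟨_, tick_mem_tickArc (m := 4 * n - 2) hn 0 (by omega) (by omega),
    tick_mem_tickArc (m := 4 * n - 2) hn 0 (by omega) (by omega)⟩

theorem thickSpiderArc_inl_inter_inr_nonempty_iff (i j : Fin n) :
    (thickSpiderArc n (.inl i) ∩ thickSpiderArc n (.inr j)).Nonempty ↔ i ≠ j := by
  have hi := i.isLt
  have hj := j.isLt
  have hn : 0 < 4 * n := by omega
  constructor
  · rintro hne rfl
    exact not_disjoint_iff_nonempty_inter.2 hne (disjoint_tickArc hn le_rfl (by omega)).symm
  · intro hij
    obtain hlt | hgt := Fin.lt_or_lt_of_ne hij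
    · exact ⟨_, tick_mem_tickArc (m := 4 * j) hn 0 (by omega) (by omega),
        tick_mem_tickArc hn 0 (by omega) (by omega)⟩
    · exact ⟨_, tick_mem_tickArc (m := 4 * j) hn 1 (by omega) (by omega),
        tick_mem_tickArc hn 0 (by omega) (by omega)⟩

theorem disjoint_thickSpiderArc_inr {i j : Fin n} (hij : i ≠ j) :
    Disjoint (thickSpiderArc n (.inr i)) (thickSpiderArc n (.inr j)) := by
  have hi := i.isLt
  have hj := j.isLt
  obtain hlt | hgt := Fin.lt_or_lt_of_ne hij
  · exact disjoint_tickArc (by omega) (by omega) (by omega)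
  · exact (disjoint_tickArc (by omega) (by omega) (by omega)).symm

theorem isConnected_thickSpiderArc (v : Fin n ⊕ Fin n) : IsConnected (thickSpiderArc n v) := by
  rcases v with i | i <;> have := i.isLt <;> exact isConnected_tickArc (by omega) (by omega)

theorem thickSpiderArc_ne_univ (v : Fin n ⊕ Fin n) : thickSpiderArc n v ≠ univ := by
  rcases v with i | i <;> have := i.isLt <;> exact tickArc_ne_univ (by omega) (by omega)

theorem thickSpider_adj_iff_inter_nonempty {u v : Fin n ⊕ Fin n} (huv : u ≠ v) :
    (thickSpider n).Adj u v ↔ (thickSpiderArc n u ∩ thickSpiderArc n v).Nonempty := by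
  rcases u with i | i <;> rcases v with j | j
  · exact iff_of_true (by simpa [thickSpider, thickSpiderAdj] using huv)
      (thickSpiderArc_inl_inter_inl_nonempty i j)
  · exact (thickSpiderArc_inl_inter_inr_nonempty_iff i j).symm
  · rw [inter_comm]
    exact (thickSpiderArc_inl_inter_inr_nonempty_iff j i).trans ne_comm |>.symm
  · exact iff_of_false id fun hne ↦
      not_disjoint_iff_nonempty_inter.2 hne (disjoint_thickSpiderArc_inr (by simpa using huv))

end ThickSpider

noncomputable def thickSpiderCAModel (n : ℕ) : CAModel (thickSpider n) where
  arc := thickSpiderArc n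
  isOpen_arc v := by cases v <;> exact isOpen_arcOf _ _
  isConnected_arc := isConnected_thickSpiderArc
  arc_ne_univ := thickSpiderArc_ne_univ
  adj_iff _ _ := thickSpider_adj_iff_inter_nonempty

theorem thickSpider_is_CA_general (n : ℕ) :
    Nonempty (CAModel (thickSpider n)) :=
  ⟨thickSpiderCAModel n⟩

theorem thickSpider_is_CA (n : ℕ) (hn : 2 ≤ n) :
    Nonempty (CAModel (thickSpider n)) :=
  thickSpider_is_CA_general n
end

section
/- The thick spider S_6 is a B_2-EPR graph but is not a normal circular-arc graph: S_6 admits an EPR representation in which every path has at most 2 bends, yet in every circular-arc model of S_6 some two arcs together cover the whole circle. -/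
open SimpleGraph

/-!
For the representation, every vertex of `S₆` walks counterclockwise along the boundary of the
square `[0, 4]²`; that it is a `B₂`-EPR representation is a finite check.

For the second part let `A i`, `B j` be the arcs of `c i`, `s j`. The stable arcs are pairwise
disjoint open sets, so by connectedness some point of the circle lies in none of them; cutting the
circle there orders them linearly as `B (σ 0) < ⋯ < B (σ 5)`. The arc `A (σ 1)` misses `B (σ 1)`,
so it may be cut open at a point of `B (σ 1)`; since it meets `B (σ 2)` and `B (σ 0)`, it then
contains the whole stretch running forwards from a point of `B (σ 2)` to a point of `B (σ 0)`.
Likewise `A (σ 4)` contains a stretch from `B (σ 5)` forwards to `B (σ 3)`. These two stretches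
overlap at both ends, so `A (σ 1) ∪ A (σ 4)` is the whole circle.
-/

open Set Function

instance : DecidableRel gridGraph.Adj := fun p q =>
  inferInstanceAs (Decidable ((p.1 = q.1 ∧ |p.2 - q.2| = 1) ∨ (p.2 = q.2 ∧ |p.1 - q.1| = 1)))

instance (P Q : GridPath) : Decidable (P.SharesEdge Q) :=
  inferInstanceAs (Decidable (∃ e, e ∈ P.walk.edges ∧ e ∈ Q.walk.edges))

instance (n : ℕ) : DecidableRel (thickSpider n).Adj
  | .inl i, .inl j | .inl i, .inr j | .inr i, .inl j => inferInstanceAs (Decidable (i ≠ j))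
  | .inr _, .inr _ => inferInstanceAs (Decidable False)

def squareBoundary (k : ℕ) : ℤ × ℤ :=
  ![(0, 0), (1, 0), (2, 0), (3, 0), (4, 0), (4, 1), (4, 2), (4, 3),
    (4, 4), (3, 4), (2, 4), (1, 4), (0, 4), (0, 3), (0, 2), (0, 1)] (Fin.ofNat 16 k)

lemma squareBoundary_mod (k : ℕ) : squareBoundary (k % 16) = squareBoundary k := by
  simp [squareBoundary, Fin.ofNat]

lemma squareBoundary_adj (k : ℕ) : gridGraph.Adj (squareBoundary k) (squareBoundary (k + 1)) := by
  have h : ∀ i < 16, gridGraph.Adj (squareBoundary i) (squareBoundary (i + 1)) := by decide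
  have := h (k % 16) (Nat.mod_lt _ (by norm_num))
  rwa [squareBoundary_mod, ← squareBoundary_mod (k % 16 + 1), Nat.mod_add_mod,
    squareBoundary_mod] at this

lemma squareBoundary_mem_rectBoundary (k : ℕ) : squareBoundary k ∈ rectBoundary 0 4 0 4 := by
  have h : ∀ i < 16, squareBoundary i ∈ rectBoundary 0 4 0 4 := by
    simp only [rectBoundary, mem_ofPred_eq]
    decide
  simpa only [squareBoundary_mod] using h (k % 16) (Nat.mod_lt _ (by norm_num))

def boundaryWalk (k : ℕ) : (l : ℕ) → gridGraph.Walk (squareBoundary k) (squareBoundary (k + l))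
  | 0 => .nil
  | l + 1 => (boundaryWalk k l).concat (squareBoundary_adj (k + l))

lemma support_boundaryWalk_subset (k l : ℕ) :
    ∀ p ∈ (boundaryWalk k l).support, p ∈ range squareBoundary := by
  induction l with
  | zero => simp [boundaryWalk]
  | succ l ih =>
    intro p hp
    rw [boundaryWalk, Walk.support_concat, List.mem_append, List.mem_singleton] at hp
    rcases hp with hp | rfl
    · exact ih p hp
    · exact ⟨_, rfl⟩

/-- Start position and number of steps of the boundary walk of each vertex of `S₆`. The walk of
`c i` covers 11 or 12 of the 16 boundary edges, passing at most two corners, and the stretch it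
leaves free contains the walk of `s i`. -/
def spiderSixSegment : Fin 6 ⊕ Fin 6 → ℕ × ℕ
  | .inl i => ![(4, 11), (5, 11), (8, 12), (12, 11), (13, 11), (0, 12)] i
  | .inr i => ![(15, 2), (3, 2), (6, 1), (7, 2), (11, 2), (13, 2)] i

lemma isPath_spiderSixWalk :
    ∀ v, (boundaryWalk (spiderSixSegment v).1 (spiderSixSegment v).2).IsPath := by
  simp only [Walk.isPath_def]
  decide

lemma one_le_length_spiderSixWalk :
    ∀ v, 1 ≤ (boundaryWalk (spiderSixSegment v).1 (spiderSixSegment v).2).length := by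
  decide

def spiderSixPath (v : Fin 6 ⊕ Fin 6) : GridPath where
  src := _
  dst := _
  walk := boundaryWalk (spiderSixSegment v).1 (spiderSixSegment v).2
  isPath := isPath_spiderSixWalk v
  pos_length := one_le_length_spiderSixWalk v

lemma bends_spiderSixPath_le : ∀ v, (spiderSixPath v).bends ≤ 2 := by
  decide +kernel

def spiderSixEPGRep : EPGRep (thickSpider 6) where
  path := spiderSixPath
  adj_iff := by decide +kernel

lemma spiderSixEPGRep_inRectangle : spiderSixEPGRep.InRectangle := by
  refine ⟨0, 4, 0, 4, by norm_num, by norm_num, fun v p hp => ?_⟩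
  obtain ⟨k, rfl⟩ := support_boundaryWalk_subset _ _ p hp
  exact squareBoundary_mem_rectBoundary k

theorem isBkEPR_thickSpider_six : IsBkEPR (thickSpider 6) 2 :=
  ⟨spiderSixEPGRep, spiderSixEPGRep_inRectangle, bends_spiderSixPath_le⟩

lemma exists_forall_notMem_of_pairwise_disjoint {X ι : Type*} [TopologicalSpace X]
    [PreconnectedSpace X] {B : ι → Set X} (hBo : ∀ j, IsOpen (B j))
    (hBd : Pairwise (Disjoint on B)) {i j : ι} (hij : i ≠ j) (hi : (B i).Nonempty)
    (hj : (B j).Nonempty) : ∃ z, ∀ k, z ∉ B k := by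
  by_contra! hcover
  have hclopen : IsClopen (B i) := by
    refine ⟨⟨isOpen_iff_forall_mem_open.2 fun z hz => ?_⟩, hBo i⟩
    obtain ⟨k, hk⟩ := hcover z
    have hki : k ≠ i := by rintro rfl; exact hz hk
    exact ⟨B k, (hBd hki).subset_compl_right, hBo k, hk⟩
  obtain ⟨z, hz⟩ := hj
  exact disjoint_left.1 (hBd hij) (hclopen.eq_univ hi ▸ mem_univ z) hz

lemma lt_of_lt_of_isPreconnected_of_disjoint {I J : Set ℝ} (hI : IsPreconnected I)
    (hJ : IsPreconnected J) (hIJ : Disjoint I J) {x y x' y' : ℝ} (hx : x ∈ I) (hy : y ∈ J)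
    (hxy : x < y) (hx' : x' ∈ I) (hy' : y' ∈ J) : x' < y' := by
  by_contra! hyx
  rcases le_or_gt y x' with hyx' | hxy'
  · exact disjoint_left.1 hIJ (hI.Icc_subset hx hx' ⟨hxy.le, hyx'⟩) hy
  · exact disjoint_left.1 hIJ hx' (hJ.Icc_subset hy' hy ⟨hyx, hxy'.le⟩)

def liftIn (t : ℝ) (U : Set ArcCircle) : Set ℝ := Ioo t (t + 1) ∩ (↑) ⁻¹' U

lemma liftIn_eq_image_symm {U : Set ArcCircle} {t : ℝ} (ht : (t : ArcCircle) ∉ U) :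
    liftIn t U = (AddCircle.openPartialHomeomorphCoe 1 t).symm '' U := by
  set e := AddCircle.openPartialHomeomorphCoe (1 : ℝ) t
  have hU : e.target ∩ U = U := inter_eq_right.2 fun z hz hzt => ht (hzt ▸ hz)
  rw [← hU, e.symm_image_target_inter_eq]
  rfl

lemma isPreconnected_liftIn {U : Set ArcCircle} {t : ℝ} (hU : IsPreconnected U)
    (ht : (t : ArcCircle) ∉ U) : IsPreconnected (liftIn t U) := by
  rw [liftIn_eq_image_symm ht]
  exact hU.image _ ((AddCircle.openPartialHomeomorphCoe 1 t).continuousOn_symm.mono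
    fun z hz hzt => ht (hzt ▸ hz))

lemma exists_mem_liftIn {U : Set ArcCircle} {t : ℝ} (ht : (t : ArcCircle) ∉ U) {z : ArcCircle}
    (hz : z ∈ U) : ∃ x ∈ liftIn t U, (x : ArcCircle) = z := by
  rw [liftIn_eq_image_symm ht]
  exact ⟨_, mem_image_of_mem _ hz,
    (AddCircle.openPartialHomeomorphCoe 1 t).right_inv fun hzt => ht (hzt ▸ hz)⟩

lemma image_Icc_subset_of_mem_liftIn {U : Set ArcCircle} {s x y : ℝ} (hU : IsPreconnected U)
    (hs : (s : ArcCircle) ∉ U) (hx : x ∈ liftIn s U) (hy : y ∈ liftIn s U) :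
    (↑) '' Icc x y ⊆ U :=
  image_subset_iff.2 (((isPreconnected_liftIn hU hs).Icc_subset hx hy).trans inter_subset_right)

/-- `A i` and `B j` play the arcs of the clique vertex `c i` and the stable vertex `s j` in a
circular-arc model of a thick spider. -/
structure IsSpiderModel {ι : Type*} (A B : ι → Set ArcCircle) : Prop where
  isOpen_B : ∀ j, IsOpen (B j)
  isConnected_B : ∀ j, IsConnected (B j)
  pairwise_disjoint_B : Pairwise (Disjoint on B)
  isPreconnected_A : ∀ i, IsPreconnected (A i)
  disjoint_A_B : ∀ i, Disjoint (A i) (B i)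
  nonempty_A_inter_B : ∀ i j, i ≠ j → (A i ∩ B j).Nonempty

namespace IsSpiderModel

variable {ι κ : Type*} {A B : ι → Set ArcCircle}

lemma comp (h : IsSpiderModel A B) {σ : κ → ι} (hσ : Injective σ) :
    IsSpiderModel (A ∘ σ) (B ∘ σ) where
  isOpen_B j := h.isOpen_B (σ j)
  isConnected_B j := h.isConnected_B (σ j)
  pairwise_disjoint_B := h.pairwise_disjoint_B.comp_of_injective hσ
  isPreconnected_A i := h.isPreconnected_A (σ i)
  disjoint_A_B i := h.disjoint_A_B (σ i)
  nonempty_A_inter_B i j hij := h.nonempty_A_inter_B (σ i) (σ j) (hσ.ne hij)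

section Sorted

variable [LinearOrder ι] {t : ℝ} {b : ι → ℝ}

lemma lt_of_mem_liftIn (h : IsSpiderModel A B) (hb : StrictMono b)
    (hbB : ∀ j, b j ∈ liftIn t (B j)) (ht : ∀ j, (t : ArcCircle) ∉ B j) {j k : ι} (hjk : j < k)
    {x y : ℝ} (hx : x ∈ liftIn t (B j)) (hy : y ∈ liftIn t (B k)) : x < y :=
  lt_of_lt_of_isPreconnected_of_disjoint (isPreconnected_liftIn (h.isConnected_B j).2 (ht j))
    (isPreconnected_liftIn (h.isConnected_B k).2 (ht k))
    (((h.pairwise_disjoint_B hjk.ne).preimage _).mono inter_subset_right inter_subset_right)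
    (hbB j) (hbB k) (hb hjk) hx hy

lemma exists_image_Icc_subset (h : IsSpiderModel A B) (hb : StrictMono b)
    (hbB : ∀ j, b j ∈ liftIn t (B j)) (ht : ∀ j, (t : ArcCircle) ∉ B j) {l i u : ι}
    (hli : l < i) (hiu : i < u) :
    ∃ x ∈ liftIn t (B u), ∃ y ∈ liftIn t (B l), (↑) '' Icc x (y + 1) ⊆ A i := by
  have hs : ((b i : ℝ) : ArcCircle) ∉ A i := disjoint_right.1 (h.disjoint_A_B i) (hbB i).2
  obtain ⟨w, hwA, hwB⟩ := h.nonempty_A_inter_B i u hiu.ne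
  obtain ⟨x, hx, rfl⟩ := exists_mem_liftIn (ht u) hwB
  obtain ⟨w', hw'A, hw'B⟩ := h.nonempty_A_inter_B i l hli.ne'
  obtain ⟨y, hy, rfl⟩ := exists_mem_liftIn (ht l) hw'B
  have hbx := h.lt_of_mem_liftIn hb hbB ht hiu (hbB i) hx
  have hyb := h.lt_of_mem_liftIn hb hbB ht hli hy (hbB i)
  have hbi := (hbB i).1
  refine ⟨x, hx, y, hy, image_Icc_subset_of_mem_liftIn (h.isPreconnected_A i) hs
    ⟨⟨hbx, ?_⟩, hwA⟩ ⟨⟨?_, ?_⟩, ?_⟩⟩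
  · linarith [hx.1.2, hbi.1]
  · linarith [hy.1.1, hbi.2]
  · linarith
  · simpa [AddCircle.coe_add_period] using hw'A

end Sorted

lemma union_eq_univ_of_strictMono {A B : Fin 6 → Set ArcCircle} {t : ℝ} {b : Fin 6 → ℝ}
    (h : IsSpiderModel A B) (hb : StrictMono b) (hbB : ∀ j, b j ∈ liftIn t (B j))
    (ht : ∀ j, (t : ArcCircle) ∉ B j) : A 1 ∪ A 4 = univ := by
  obtain ⟨x₂, hx₂, y₀, hy₀, h₁⟩ :=
    h.exists_image_Icc_subset hb hbB ht (l := 0) (i := 1) (u := 2) (by decide) (by decide)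
  obtain ⟨x₅, hx₅, y₃, hy₃, h₄⟩ :=
    h.exists_image_Icc_subset hb hbB ht (l := 3) (i := 4) (u := 5) (by decide) (by decide)
  have hx₂y₃ := h.lt_of_mem_liftIn hb hbB ht (j := 2) (k := 3) (by decide) hx₂ hy₃
  refine eq_univ_of_univ_subset ?_
  rw [← AddCircle.coe_image_Icc_eq 1 x₂]
  rintro _ ⟨z, hz, rfl⟩
  rcases le_or_gt z (y₀ + 1) with hzy | hzy
  · exact Or.inl (h₁ ⟨z, ⟨hz.1, hzy⟩, rfl⟩)
  · exact Or.inr (h₄ ⟨z, ⟨by linarith [hx₅.1.2, hy₀.1.1], by linarith [hz.2]⟩, rfl⟩)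

lemma exists_union_eq_univ {A B : Fin 6 → Set ArcCircle} (h : IsSpiderModel A B) :
    ∃ i j, A i ∪ A j = univ := by
  obtain ⟨z, hz⟩ := exists_forall_notMem_of_pairwise_disjoint h.isOpen_B h.pairwise_disjoint_B
    (i := 0) (j := 1) (by decide) (h.isConnected_B 0).1 (h.isConnected_B 1).1
  obtain ⟨t, rfl⟩ := QuotientAddGroup.mk_surjective z
  have hlift : ∀ j, ∃ x, x ∈ liftIn t (B j) := fun j =>
    let ⟨_, hw⟩ := (h.isConnected_B j).1
    let ⟨x, hx, _⟩ := exists_mem_liftIn (hz j) hw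
    ⟨x, hx⟩
  choose b hbB using hlift
  have hb : Injective b := fun i j hij => by
    by_contra hne
    exact disjoint_left.1 (h.pairwise_disjoint_B hne) (hbB i).2 (hij ▸ (hbB j).2)
  set σ := Tuple.sort b
  exact ⟨σ 1, σ 4, union_eq_univ_of_strictMono (h.comp σ.injective)
    ((Tuple.monotone_sort b).strictMono_of_injective (hb.comp σ.injective)) (fun j => hbB (σ j))
    (fun j => hz (σ j))⟩

end IsSpiderModel

lemma CAModel.isSpiderModel {n : ℕ} (M : CAModel (thickSpider n)) :
    IsSpiderModel (fun i => M.arc (.inl i)) (fun j => M.arc (.inr j)) where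
  isOpen_B j := M.isOpen_arc _
  isConnected_B j := M.isConnected_arc _
  pairwise_disjoint_B i j hij := not_not.1 fun hne =>
    (M.adj_iff _ _ (by simpa using hij)).2 (not_disjoint_iff_nonempty_inter.1 hne)
  isPreconnected_A i := (M.isConnected_arc _).2
  disjoint_A_B i := not_not.1 fun hne =>
    ((M.adj_iff _ _ Sum.inl_ne_inr).2 (not_disjoint_iff_nonempty_inter.1 hne) : i ≠ i) rfl
  nonempty_A_inter_B i j hij := (M.adj_iff (.inl i) (.inr j) Sum.inl_ne_inr).1 hij

theorem CAModel.exists_arc_union_eq_univ_of_thickSpider {n : ℕ} (hn : 6 ≤ n)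
    (M : CAModel (thickSpider n)) : ∃ u v, M.arc u ∪ M.arc v = univ :=
  let ⟨_, _, hij⟩ := (M.isSpiderModel.comp (Fin.castLE_injective hn)).exists_union_eq_univ
  ⟨_, _, hij⟩

theorem thickSpider6_B2_EPR_not_NCA :
    IsBkEPR (thickSpider 6) 2 ∧
    ∀ M : CAModel (thickSpider 6), ∃ u v, M.arc u ∪ M.arc v = Set.univ :=
  ⟨isBkEPR_thickSpider_six, fun M => M.exists_arc_union_eq_univ_of_thickSpider le_rfl⟩
end

section
/- Let G be a finite, connected, simple graph that is not chordal, and suppose G admits an NHCA model together with four points of the circle, each distinct from every endpoint of every arc of the model, such that no arc of the model contains two of these four points. Then G has four pairwise disjoint nonempty complete subgraphs H_1, H_2, H_3, H_4 such that H_1 and H_3 lie in different connected components of G − (V(H_2) ∪ V(H_4)) and H_2 and H_4 lie in different connected components of G − (V(H_1) ∪ V(H_3)). -/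
open SimpleGraph

/-!
Let `S i` be the set of vertices whose arcs contain the `i`-th of the four points, numbered in
cyclic order. Each `S i` is a clique, and the `S i` are pairwise disjoint because no arc contains
two of the points. They are nonempty because a point covered by no arc cuts the circle open into
a line: then `G` has an open interval model and is therefore chordal. After the vertices of
`S 1 ∪ S 3` are deleted, every remaining arc avoids points `1` and `3`, so it lies in one of the
two open arcs into which those points cut the circle. Intersecting arcs lie in the same piece, so
`S 0` and `S 2` end up in different components. The same argument applies to `S 1` and `S 3`.
-/

open Set

theorem inter_nonempty_of_interval_cycle {m : ℕ} (hm : 4 ≤ m) {L : ℕ → Set ℝ}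
    (hopen : ∀ j, IsOpen (L j)) (hpre : ∀ j, IsPreconnected (L j))
    (hchain : ∀ j, j + 1 < m → (L j ∩ L (j + 1)).Nonempty)
    (hclose : (L (m - 1) ∩ L 0).Nonempty)
    (h1 : ∀ j, 3 ≤ j → j < m → Disjoint (L 1) (L j)) : (L 0 ∩ L 2).Nonempty := by
  obtain ⟨x, hx0, hx1⟩ := hchain 0 (by omega)
  obtain ⟨y, hy1, hy2⟩ := hchain 1 (by omega)
  obtain ⟨z, hzm, hz0⟩ := hclose
  set U := ⋃ j ∈ Icc 2 (m - 1), L j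
  have hU : IsPreconnected U :=
    IsPreconnected.biUnion_of_chain ordConnected_Icc (fun j _ => hpre j)
      fun j _ hj => hchain j (by simp at hj; omega)
  -- `[x, y] ⊆ L 1` lies in the preconnected `L 0 ∪ L 2 ∪ ⋯ ∪ L (m-1)` but misses
  -- `L 3, …, L (m-1)`, so it is covered by `L 0 ∪ L 2`, which splits it unless they meet
  have hV : IsPreconnected (L 0 ∪ U) :=
    (hpre 0).union z hz0 (mem_biUnion (mem_Icc.mpr ⟨by omega, le_rfl⟩) hzm) hU
  have hxyV : uIcc x y ⊆ L 0 ∪ U := hV.ordConnected.uIcc_subset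
    (Or.inl hx0) (Or.inr (mem_biUnion (mem_Icc.mpr ⟨le_rfl, by omega⟩) hy2))
  have hseg : uIcc x y ⊆ L 0 ∪ L 2 := by
    intro w hw
    obtain hw0 | hwU := hxyV hw
    · exact Or.inl hw0
    obtain ⟨j, ⟨hj2, hjm⟩, hwj⟩ := mem_iUnion₂.mp hwU
    obtain rfl | hj3 := eq_or_lt_of_le hj2
    · exact Or.inr hwj
    · exact absurd hwj ((h1 j hj3 (by omega)).notMem_of_mem_left
        ((hpre 1).ordConnected.uIcc_subset hx1 hy1 hw))
  refine not_disjoint_iff_nonempty_inter.mp fun hdisj => ?_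
  obtain hsub | hsub := isPreconnected_uIcc.subset_or_subset (hopen 0) (hopen 2) hdisj hseg
  · exact hdisj.notMem_of_mem_left (hsub right_mem_uIcc) hy2
  · exact hdisj.notMem_of_mem_left hx0 (hsub left_mem_uIcc)

theorem cyclePower_adj_mk {m k i j : ℕ} (hi : i < m) (hj : j < m) :
    (cyclePower m k).Adj ⟨i, hi⟩ ⟨j, hj⟩ ↔
      i ≠ j ∧ min ((i : ℤ) - j).natAbs (m - ((i : ℤ) - j).natAbs) ≤ k := by
  simp [cyclePower, cycDist]

theorem isChordal_of_interval_model {W : Type*} (H : SimpleGraph W) (L : W → Set ℝ)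
    (hopen : ∀ w, IsOpen (L w)) (hpre : ∀ w, IsPreconnected (L w))
    (hadj : ∀ u v, u ≠ v → (H.Adj u v ↔ (L u ∩ L v).Nonempty)) : IsChordal H := by
  rintro m hm ⟨e⟩
  let L' : ℕ → Set ℝ := fun j => if hj : j < m then L (e ⟨j, hj⟩) else ∅
  have hL' : ∀ i j (hi : i < m) (hj : j < m), i ≠ j →
      ((L' i ∩ L' j).Nonempty ↔
        min ((i : ℤ) - j).natAbs (m - ((i : ℤ) - j).natAbs) ≤ 1) := by
    intro i j hi hj hij
    have hne : (⟨i, hi⟩ : Fin m) ≠ ⟨j, hj⟩ := Fin.ne_of_val_ne hij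
    simp only [L', dif_pos hi, dif_pos hj]
    rw [← hadj _ _ (e.injective.ne hne), e.map_adj_iff, cyclePower_adj_mk]
    exact and_iff_right hij
  have h02 := inter_nonempty_of_interval_cycle hm (L := L')
    (fun j => by by_cases hj : j < m <;> simp [L', hj, hopen])
    (fun j => by by_cases hj : j < m <;> simp [L', hj, hpre, isPreconnected_empty])
    (fun j hj => (hL' j (j + 1) (by omega) hj (by omega)).mpr (by omega))
    ((hL' (m - 1) 0 (by omega) (by omega) (by omega)).mpr (by omega))
    (fun j hj3 hj => disjoint_iff_inter_eq_empty.mpr <|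
      not_nonempty_iff_eq_empty.mp fun h1j =>
        absurd ((hL' 1 j (by omega) hj (by omega)).mp h1j) (by omega))
  exact absurd ((hL' 0 2 (by omega) (by omega) (by omega)).mp h02) (by omega)

namespace CAModel

variable {V : Type*} {G : SimpleGraph V} (M : CAModel G)

theorem exists_mem_arc (hG : ¬ IsChordal G) (q : ArcCircle) : ∃ v, q ∈ M.arc v := by
  by_contra! hq
  obtain ⟨t, rfl⟩ := QuotientAddGroup.mk_surjective q
  -- cutting the circle at the uncovered point `t` turns the arcs into open intervals
  let e := AddCircle.openPartialHomeomorphCoe (1 : ℝ) t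
  have htarget : ∀ v, M.arc v ⊆ e.target := fun v x hx hxt => hq v (hxt ▸ hx)
  refine hG (isChordal_of_interval_model G (fun v => e.source ∩ e ⁻¹' M.arc v)
    (fun v => e.isOpen_inter_preimage (M.isOpen_arc v)) (fun v => ?_) (fun u v huv => ?_))
  · rw [← e.symm_image_eq_source_inter_preimage (htarget v)]
    exact (M.isConnected_arc v).isPreconnected.image _ (e.continuousOn_symm.mono (htarget v))
  · rw [M.adj_iff u v huv, ← inter_inter_distrib_left, ← preimage_inter,
      ← e.symm_image_eq_source_inter_preimage (inter_subset_left.trans (htarget u)),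
      image_nonempty]

theorem not_reachable_induce_of_subset_union {X : Set V} {A B : Set ArcCircle}
    (hA : IsOpen A) (hB : IsOpen B) (hAB : Disjoint A B)
    (hcover : ∀ v : ↥Xᶜ, M.arc v ⊆ A ∪ B) {u w : ↥Xᶜ}
    (hu : (M.arc u ∩ A).Nonempty) (hw : (M.arc w ∩ B).Nonempty) :
    ¬ (G.induce Xᶜ).Reachable u w := by
  have hside : ∀ v : ↥Xᶜ, M.arc v ⊆ A ∨ M.arc v ⊆ B := fun v =>
    (M.isConnected_arc v).isPreconnected.subset_or_subset hA hB hAB (hcover v)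
  have huA : M.arc u ⊆ A := by
    obtain ⟨x, hxu, hxA⟩ := hu
    exact (hside u).resolve_right fun huB => hAB.notMem_of_mem_left hxA (huB hxu)
  intro h
  obtain ⟨y, hyw, hyB⟩ := hw
  have hwA : M.arc w ⊆ A := by
    clear hyw
    rw [reachable_iff_reflTransGen] at h
    induction h with
    | refl => exact huA
    | @tail v v' _ hadj ih =>
      obtain ⟨x, hxv, hxv'⟩ := (M.adj_iff v v' (Subtype.coe_ne_coe.mpr hadj.ne)).mp hadj
      exact (hside v').resolve_right fun hv'B => hAB.notMem_of_mem_left (ih hxv) (hv'B hxv')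
  exact hAB.notMem_of_mem_left (hwA hyw) hyB

theorem separatedIn_of_lt {a b c d : ℝ} (hab : a < b) (hbc : b < c) (hcd : c < d)
    (hda : d < a + 1) :
    SeparatedIn G ({v | (b : ArcCircle) ∈ M.arc v} ∪ {v | (d : ArcCircle) ∈ M.arc v})
      {v | (a : ArcCircle) ∈ M.arc v} {v | (c : ArcCircle) ∈ M.arc v} := by
  intro u w hu hw hua hwc
  let e := AddCircle.openPartialHomeomorphCoe (1 : ℝ) b
  have hsource : Ioo b d ∪ Ioo d (b + 1) ⊆ e.source := union_subset
    (Ioo_subset_Ioo_right (by linarith)) (Ioo_subset_Ioo_left (by linarith))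
  refine M.not_reachable_induce_of_subset_union (A := e '' Ioo d (b + 1)) (B := e '' Ioo b d)
    (e.isOpen_image_of_subset_source isOpen_Ioo (subset_union_right.trans hsource))
    (e.isOpen_image_of_subset_source isOpen_Ioo (subset_union_left.trans hsource))
    ?_ (fun v x hx => ?_) ⟨a, hua, a + 1, ⟨by linarith, by linarith⟩, ?_⟩
    ⟨c, hwc, c, ⟨hbc, hcd⟩, rfl⟩
  · rw [disjoint_iff_inter_eq_empty,
      ← e.injOn.image_inter (subset_union_right.trans hsource) (subset_union_left.trans hsource)]
    exact image_eq_empty.mpr (eq_empty_of_forall_notMem fun x hx => lt_asymm hx.1.1 hx.2.2)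
  · have hxb : x ∈ e.target := fun hxb => v.2 (Or.inl ((mem_singleton_iff.mp hxb) ▸ hx))
    obtain ⟨r, hr, rfl⟩ : x ∈ e '' e.source :=
      ⟨e.symm x, e.map_target hxb, e.right_inv hxb⟩
    have hrd : r ≠ d := fun hrd => v.2 (Or.inr (hrd ▸ hx))
    obtain hrd | hdr := hrd.lt_or_gt
    · exact Or.inr ⟨r, ⟨hr.1, hrd⟩, rfl⟩
    · exact Or.inl ⟨r, ⟨hdr, hr.2⟩, rfl⟩
  · exact AddCircle.coe_add_period 1 a

end CAModel

theorem ArcCircle.exists_strictMono_lift {n : ℕ} {p : Fin n → ArcCircle}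
    (hp : Function.Injective p) :
    ∃ σ : Equiv.Perm (Fin n), ∃ x : Fin n → ℝ,
      StrictMono x ∧ (∀ i j, x i < x j + 1) ∧ ∀ i, (x i : ArcCircle) = p (σ i) := by
  have hrep : ∀ i, ∃ r ∈ Ico (0 : ℝ) 1, (r : ArcCircle) = p i := fun i => by
    simpa using (AddCircle.coe_image_Ico_eq (1 : ℝ) 0).ge (mem_univ (p i))
  choose r hr hrp using hrep
  have hr_inj : Function.Injective r := fun i j hij => hp (by rw [← hrp i, ← hrp j, hij])
  refine ⟨Tuple.sort r, r ∘ Tuple.sort r,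
    (Tuple.monotone_sort r).strictMono_of_injective (hr_inj.comp (Tuple.sort r).injective),
    fun i j => ?_, fun i => hrp _⟩
  show r _ < r _ + 1
  linarith [(hr (Tuple.sort r i)).2, (hr (Tuple.sort r j)).1]

theorem fourPoints_implies_fourCliques_general {V : Type*} (G : SimpleGraph V)
    (hchordal : ¬ IsChordal G)
    (h : ∃ M : CAModel G, M.NHCA ∧ FourPointsProperty M) :
    ∃ S : Fin 4 → Set V, FourSeparating G S ∧ ∀ i, G.IsClique (S i) := by
  obtain ⟨M, -, p, hp, -, hpairs⟩ := h
  obtain ⟨σ, x, hx, hx1, hxp⟩ := ArcCircle.exists_strictMono_lift hp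
  have h01 : x 0 < x 1 := hx (by decide)
  have h12 : x 1 < x 2 := hx (by decide)
  have h23 : x 2 < x 3 := hx (by decide)
  refine ⟨fun i => {v | (x i : ArcCircle) ∈ M.arc v}, ⟨fun i j hij => ?_,
    fun i => M.exists_mem_arc hchordal _, M.separatedIn_of_lt h01 h12 h23 (hx1 3 0), ?_⟩,
    fun i u hu v hv huv => (M.adj_iff u v huv).mpr ⟨_, hu, hv⟩⟩
  · refine disjoint_left.mpr fun v hvi hvj => hpairs v _ _ (σ.injective.ne hij) ?_
    rw [← hxp, ← hxp]
    exact ⟨hvi, hvj⟩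
  · beta_reduce
    rw [← AddCircle.coe_add_period 1 (x 0), union_comm]
    exact M.separatedIn_of_lt h12 h23 (by linarith [hx1 3 0]) (by linarith)

theorem fourPoints_implies_fourCliques {V : Type*} [Fintype V] (G : SimpleGraph V)
    (hconn : G.Connected) (hchordal : ¬ IsChordal G)
    (h : ∃ M : CAModel G, M.NHCA ∧ FourPointsProperty M) :
    ∃ S : Fin 4 → Set V, FourSeparating G S ∧ ∀ i, G.IsClique (S i) :=
  fourPoints_implies_fourCliques_general G hchordal h
end

section
/- For all integers k ≥ 2 and n ≥ 3 with 3k < n < 4k, the power of a cycle C_n^k contains some power of a cycle C_{4t-1}^t with t ≥ 2 as an induced subgraph. -/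
open SimpleGraph

/-!
For `t / m ≤ k / n` and `(k + 1) / n ≤ (t + 1) / m`, the rounding map `i ↦ ⌊i n / m⌋` is an
induced embedding of `C_m^t` into `C_n^k`: it scales cyclic distances by `n / m` up to an error
below one, which is too small to move a distance across the threshold `k`. When `3k < n < 4k`,
put `d = 4k - n`; then `t = ⌈k / d⌉ ≥ 2` satisfies both bounds with `m = 4t - 1`.
-/

lemma cycDist_comm (n : ℕ) (i j : Fin n) : cycDist n i j = cycDist n j i := by
  simp only [cycDist, ← Int.natAbs_neg (i.val - j.val : ℤ), neg_sub]

lemma cycDist_of_le {n : ℕ} {i j : Fin n} (h : j ≤ i) :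
    cycDist n i j = min (i - j : ℕ) (n - (i - j)) := by
  simp only [cycDist, Fin.le_def] at h ⊢
  omega

lemma le_iff_le_of_mul_approx {m n t k e D : ℕ} (hA : t * n ≤ k * m)
    (hB : (k + 1) * m ≤ (t + 1) * n) (hDe : D * m < e * n + m) (heD : e * n < D * m + m) :
    D ≤ k ↔ e ≤ t := by
  constructor
  · intro hD
    by_contra! he
    have : (k + 1) * m < (D + 1) * m := calc
      (k + 1) * m ≤ (t + 1) * n := hB
      _ ≤ e * n := Nat.mul_le_mul_right n he
      _ < (D + 1) * m := by linarith
    exact absurd (Nat.lt_of_mul_lt_mul_right this) (by omega)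
  · intro he
    have : D * m < (k + 1) * m := calc
      D * m < e * n + m := hDe
      _ ≤ t * n + m := by gcongr
      _ ≤ (k + 1) * m := by linarith
    exact Nat.lt_succ_iff.mp (Nat.lt_of_mul_lt_mul_right this)

lemma min_le_iff_min_le_of_mul_approx {m n t k e D : ℕ} (hA : t * n ≤ k * m)
    (hB : (k + 1) * m ≤ (t + 1) * n) (he : e ≤ m) (hD : D ≤ n)
    (hDe : D * m < e * n + m) (heD : e * n < D * m + m) :
    min D (n - D) ≤ k ↔ min e (m - e) ≤ t := by
  have hDe' : (n - D) * m < (m - e) * n + m := by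
    zify [he, hD] at *; linarith
  have heD' : (m - e) * n < (n - D) * m + m := by
    zify [he, hD] at *; linarith
  simp only [min_le_iff, le_iff_le_of_mul_approx hA hB hDe heD,
    le_iff_le_of_mul_approx hA hB hDe' heD']

lemma le_of_mul_le_of_mul_le {m n t k : ℕ} (hA : t * n ≤ k * m)
    (hB : (k + 1) * m ≤ (t + 1) * n) : m ≤ n := by
  -- chaining the bounds gives `t * (k + 1) * m ≤ (t + 1) * k * m`, hence `t ≤ k`
  nlinarith

lemma div_sub_div_approx {m : ℕ} (hm : 0 < m) {x y : ℕ} (h : y ≤ x) :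
    (x / m - y / m) * m < (x - y) + m ∧ (x - y) < (x / m - y / m) * m + m := by
  have hxy : y / m ≤ x / m := Nat.div_le_div_right h
  have := Nat.div_mul_le_self x m
  have := Nat.div_mul_le_self y m
  have := Nat.lt_div_mul_add (a := x) hm
  have := Nat.lt_div_mul_add (a := y) hm
  rw [Nat.sub_mul]
  omega

lemma strictMono_mul_div {m n : ℕ} (hm : 0 < m) (hmn : m ≤ n) :
    StrictMono fun i : ℕ => i * n / m := by
  intro a b hab
  calc a * n / m < a * n / m + 1 := Nat.lt_succ_self _
    _ = (a * n + m) / m := (Nat.add_div_right _ hm).symm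
    _ ≤ b * n / m := Nat.div_le_div_right (by nlinarith)

theorem inducedSub_cyclePower_of_mul_le {m n t k : ℕ} (hA : t * n ≤ k * m)
    (hB : (k + 1) * m ≤ (t + 1) * n) : InducedSub (cyclePower m t) (cyclePower n k) := by
  have hmn := le_of_mul_le_of_mul_le hA hB
  let f : Fin m → Fin n := fun i =>
    ⟨i * n / m, Nat.div_lt_of_lt_mul
      (Nat.mul_lt_mul_of_lt_of_le i.isLt le_rfl (i.pos.trans_le hmn))⟩
  have hf : StrictMono f := fun a b hab => strictMono_mul_div a.pos hmn hab
  have key : ∀ a b : Fin m, b < a → (cycDist n (f a) (f b) ≤ k ↔ cycDist m a b ≤ t) := by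
    intro a b hba
    rw [cycDist_of_le (hf hba).le, cycDist_of_le hba.le]
    obtain ⟨hDe, heD⟩ := div_sub_div_approx a.pos (Nat.mul_le_mul_right n hba.le)
    rw [← Nat.sub_mul] at hDe heD
    exact min_le_iff_min_le_of_mul_approx hA hB ((Nat.sub_le _ _).trans a.isLt.le)
      ((Nat.sub_le _ _).trans (f a).isLt.le) hDe heD
  refine ⟨⟨⟨f, hf.injective⟩, fun {a b} => ?_⟩⟩
  change (f a ≠ f b ∧ cycDist n (f a) (f b) ≤ k) ↔ (a ≠ b ∧ cycDist m a b ≤ t)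
  rw [hf.injective.ne_iff]
  rcases lt_trichotomy a b with hab | rfl | hab
  · rw [cycDist_comm n, cycDist_comm m, key b a hab]
  · simp
  · rw [key a b hab]

lemma exists_ratio_bounds {k n : ℕ} (h1 : 3 * k < n) (h2 : n < 4 * k) :
    ∃ t, 2 ≤ t ∧ t * n ≤ k * (4 * t - 1) ∧ (k + 1) * (4 * t - 1) ≤ (t + 1) * n := by
  obtain ⟨d, hnd⟩ : ∃ d, n + d = 4 * k := ⟨4 * k - n, by omega⟩
  have hd0 : 0 < d := by omega
  have hlo : k ≤ (k + d - 1) / d * d := by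
    have := Nat.lt_div_mul_add (a := k + d - 1) hd0; omega
  have hhi : (k + d - 1) / d * d + 1 ≤ k + d := by
    have := Nat.div_mul_le_self (k + d - 1) d; omega
  generalize (k + d - 1) / d = t at hlo hhi
  have ht : 2 ≤ t := by
    by_contra! h
    interval_cases t <;> omega
  have htd : 2 * t + d ≤ 2 * k + 1 := by
    refine Nat.le_of_mul_le_mul_left ?_ hd0
    zify at *
    nlinarith [mul_nonneg (show (0 : ℤ) ≤ d - 1 by omega)
      (show (0 : ℤ) ≤ 2 * k - d - 2 by omega)]
  refine ⟨t, ht, ?_, ?_⟩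
  · zify [show 1 ≤ 4 * t by omega] at *
    linear_combination t * hnd + hlo
  · zify [show 1 ≤ 4 * t by omega] at *
    linear_combination -(t + 1) * hnd + hhi + 2 * htd

theorem cyclePower_contains_some_cyclePower_general (k n : ℕ)
    (h1 : 3 * k < n) (h2 : n < 4 * k) :
    ∃ t : ℕ, 2 ≤ t ∧ InducedSub (cyclePower (4 * t - 1) t) (cyclePower n k) := by
  obtain ⟨t, ht, hA, hB⟩ := exists_ratio_bounds h1 h2
  exact ⟨t, ht, inducedSub_cyclePower_of_mul_le hA hB⟩

theorem cyclePower_contains_some_cyclePower (k n : ℕ)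
    (hk : 2 ≤ k) (hn3 : 3 ≤ n) (h1 : 3 * k < n) (h2 : n < 4 * k) :
    ∃ t : ℕ, 2 ≤ t ∧ InducedSub (cyclePower (4 * t - 1) t) (cyclePower n k) :=
  cyclePower_contains_some_cyclePower_general k n h1 h2
end
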